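/- Consider the linearized ADMM setting with variables x^k, x^{k+1} ∈ ℝ^p, y^k ∈ ℝ^q, γ^k ∈ ℝ^n, matrices A ∈ ℝ^{n×p}, B ∈ ℝ^{n×q}, functions g : ℝ^p × ℝ^q → ℝ (L_g-Lipschitz differentiable), f : ℝ^p → ℝ, h : ℝ^q → ℝ, and constants L_x > 0, β > 0. If x^{k+1} is a global minimizer of f̄^k, then L_β(x^k, y^k, γ^k) − L_β(x^{k+1}, y^k, γ^k) ≥ C0 ‖x^{k+1} − x^k‖², where C0 = (L_x − L_g − β L_A)/2 and L_A is the largest eigenvalue of AᵀA. -/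

import Mathlib

open Matrix Filter
open scoped RealInnerProductSpace

noncomputable section

abbrev Vec (m : ℕ) := EuclideanSpace ℝ (Fin m)

def mv {m l : ℕ} (M : Matrix (Fin m) (Fin l) ℝ) (v : Vec l) : Vec m := WithLp.toLp 2 (M.mulVec v)

def gradx {p q : ℕ} (g : Vec p → Vec q → ℝ) (x : Vec p) (y : Vec q) : Vec p :=
  gradient (fun x' => g x' y) x

def grady {p q : ℕ} (g : Vec p → Vec q → ℝ) (x : Vec p) (y : Vec q) : Vec q :=
  gradient (g x) y

def LipschitzDifferentiable {m : ℕ} (h : Vec m → ℝ) (L : ℝ) : Prop :=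
  Differentiable ℝ h ∧ ∀ y y' : Vec m, ‖gradient h y - gradient h y'‖ ≤ L * ‖y - y'‖

def LipschitzDifferentiable2 {p q : ℕ} (g : Vec p → Vec q → ℝ) (L : ℝ) : Prop :=
  (∀ y, Differentiable ℝ fun x => g x y) ∧ (∀ x, Differentiable ℝ (g x)) ∧
    ∀ x x' : Vec p, ∀ y y' : Vec q,
      Real.sqrt (‖gradx g x y - gradx g x' y'‖ ^ 2 + ‖grady g x y - grady g x' y'‖ ^ 2) ≤
        L * Real.sqrt (‖x - x'‖ ^ 2 + ‖y - y'‖ ^ 2)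

def Lagr {p q n : ℕ} (β : ℝ) (g : Vec p → Vec q → ℝ) (f : Vec p → ℝ) (h : Vec q → ℝ)
    (A : Matrix (Fin n) (Fin p) ℝ) (B : Matrix (Fin n) (Fin q) ℝ)
    (x : Vec p) (y : Vec q) (γ : Vec n) : ℝ :=
  g x y + f x + h y + ⟪γ, mv A x + mv B y⟫ + β / 2 * ‖mv A x + mv B y‖ ^ 2

def fbar {p q n : ℕ} (f : Vec p → ℝ) (g : Vec p → Vec q → ℝ)
    (A : Matrix (Fin n) (Fin p) ℝ) (B : Matrix (Fin n) (Fin q) ℝ) (β Lx : ℝ)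
    (xk : Vec p) (yk : Vec q) (γk : Vec n) (x : Vec p) : ℝ :=
  f x + ⟪γk, mv A x⟫ + Lx / 2 * ‖x - xk‖ ^ 2 +
    ⟪x - xk, gradx g xk yk + β • mv Aᵀ (mv A xk + mv B yk)⟫

def hbar {p q n : ℕ} (g : Vec p → Vec q → ℝ) (h : Vec q → ℝ)
    (A : Matrix (Fin n) (Fin p) ℝ) (B : Matrix (Fin n) (Fin q) ℝ) (β Ly : ℝ)
    (xk1 : Vec p) (yk : Vec q) (γk : Vec n) (y : Vec q) : ℝ :=
  ⟪γk, mv B y⟫ + Ly / 2 * ‖y - yk‖ ^ 2 + β / 2 * ‖mv A xk1 + mv B y‖ ^ 2 +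
    ⟪y - yk, grady g xk1 yk + gradient h yk⟫

def IsSmallestEigenvalue {m : ℕ} (M : Matrix (Fin m) (Fin m) ℝ) (lam : ℝ) : Prop :=
  (∃ v : Fin m → ℝ, v ≠ 0 ∧ M.mulVec v = lam • v) ∧
    ∀ μ : ℝ, (∃ v : Fin m → ℝ, v ≠ 0 ∧ M.mulVec v = μ • v) → lam ≤ μ

def IsLargestEigenvalue {m : ℕ} (M : Matrix (Fin m) (Fin m) ℝ) (lam : ℝ) : Prop :=
  (∃ v : Fin m → ℝ, v ≠ 0 ∧ M.mulVec v = lam • v) ∧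
    ∀ μ : ℝ, (∃ v : Fin m → ℝ, v ≠ 0 ∧ M.mulVec v = μ • v) → μ ≤ lam

def RegularSubgradientAt {m : ℕ} (f : Vec m → ℝ) (x₀ v : Vec m) : Prop :=
  ∀ ε > 0, ∀ᶠ x in nhds x₀, f x₀ + ⟪v, x - x₀⟫ - ε * ‖x - x₀‖ ≤ f x

/-! With d = x^{k+1} - x^k, the descent lemma bounds g(x^{k+1}, y^k) by its linearization at x^k
plus (L_g/2)‖d‖², and the quadratic penalty (β/2)‖Ax + By^k‖² exceeds its linearization at x^k
by exactly (β/2)‖Ad‖² ≤ (β L_A/2)‖d‖². Comparing f̄^k at its minimizer x^{k+1} with its value at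
x^k, where the proximal and linear terms vanish, cancels all the linear terms and leaves
(L_x/2)‖d‖² against (L_g + β L_A)/2 ‖d‖². -/

theorem apply_add_le_of_lipschitz_gradient {E : Type*} [NormedAddCommGroup E]
    [InnerProductSpace ℝ E] [CompleteSpace E] {G : E → ℝ} {L : ℝ} (hG : Differentiable ℝ G)
    (hlip : ∀ a b, ‖gradient G a - gradient G b‖ ≤ L * ‖a - b‖) (x d : E) :
    G (x + d) ≤ G x + ⟪gradient G x, d⟫ + L / 2 * ‖d‖ ^ 2 := by
  have hpath : ∀ t : ℝ, HasDerivAt (fun s : ℝ => G (x + s • d)) ⟪gradient G (x + t • d), d⟫ t :=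
    fun t => by
      have hline : HasDerivAt (fun s : ℝ => x + s • d) d t := by
        simpa using ((hasDerivAt_id t).smul_const d).const_add x
      rw [inner_gradient_left]
      exact (hG _).hasFDerivAt.comp_hasDerivAt t hline
  have hmajorant : ∀ t : ℝ, HasDerivAt
      (fun s : ℝ => G x + s * ⟪gradient G x, d⟫ + L / 2 * s ^ 2 * ‖d‖ ^ 2)
      (⟪gradient G x, d⟫ + L * t * ‖d‖ ^ 2) t := fun t => by
    have hlin := ((hasDerivAt_id t).mul_const ⟪gradient G x, d⟫).const_add (G x)
    have hquad := ((hasDerivAt_pow 2 t).const_mul (L / 2)).mul_const (‖d‖ ^ 2)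
    exact (hlin.add hquad).congr_deriv (by push_cast; ring)
  have hslope : ∀ t ∈ Set.Ico (0 : ℝ) 1,
      ⟪gradient G (x + t • d), d⟫ ≤ ⟪gradient G x, d⟫ + L * t * ‖d‖ ^ 2 := by
    rintro t ⟨ht, -⟩
    calc ⟪gradient G (x + t • d), d⟫
        = ⟪gradient G x, d⟫ + ⟪gradient G (x + t • d) - gradient G x, d⟫ := by
          rw [inner_sub_left]; ring
      _ ≤ ⟪gradient G x, d⟫ + L * ‖t • d‖ * ‖d‖ := by
          gcongr
          refine (real_inner_le_norm _ _).trans ?_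
          gcongr
          simpa using hlip (x + t • d) x
      _ = ⟪gradient G x, d⟫ + L * t * ‖d‖ ^ 2 := by
          rw [norm_smul, Real.norm_of_nonneg ht]; ring
  simpa using image_le_of_deriv_right_le_deriv_boundary
    (fun t _ => (hpath t).continuousAt.continuousWithinAt)
    (fun t _ => (hpath t).hasDerivWithinAt) (by simp)
    (fun t _ => (hmajorant t).continuousAt.continuousWithinAt)
    (fun t _ => (hmajorant t).hasDerivWithinAt) hslope (Set.right_mem_Icc.2 zero_le_one)

lemma mv_add {m l : ℕ} (M : Matrix (Fin m) (Fin l) ℝ) (u v : Vec l) :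
    mv M (u + v) = mv M u + mv M v := by
  ext i
  simp [mv, mulVec_add]

lemma mv_mul {m k l : ℕ} (M : Matrix (Fin m) (Fin k) ℝ) (N : Matrix (Fin k) (Fin l) ℝ)
    (v : Vec l) : mv (M * N) v = mv M (mv N v) := by
  simp [mv, mulVec_mulVec]

lemma inner_mv_right {m l : ℕ} (M : Matrix (Fin m) (Fin l) ℝ) (w : Vec m) (u : Vec l) :
    ⟪w, mv M u⟫ = ⟪mv Mᵀ w, u⟫ := by
  simp only [mv, PiLp.inner_apply, RCLike.inner_apply, conj_trivial]
  have : (w : Fin m → ℝ) ⬝ᵥ (M *ᵥ u) = (Mᵀ *ᵥ w) ⬝ᵥ (u : Fin l → ℝ) := by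
    rw [dotProduct_mulVec, mulVec_transpose]
  simpa [dotProduct, mul_comm] using this

lemma inner_mv_self_le_mul_norm_sq {m : ℕ} {M : Matrix (Fin m) (Fin m) ℝ} (hM : M.IsHermitian)
    {lam : ℝ} (hlam : ∀ μ : ℝ, (∃ v : Fin m → ℝ, v ≠ 0 ∧ M.mulVec v = μ • v) → μ ≤ lam)
    (v : Vec m) :
    ⟪v, mv M v⟫ ≤ lam * ‖v‖ ^ 2 := by
  set b := hM.eigenvectorBasis
  have hMT : Mᵀ = M := by simpa [conjTranspose_eq_transpose_of_trivial] using hM.eq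
  have hMb : ∀ i, mv M (b i) = hM.eigenvalues i • b i := fun i => by
    ext j
    simpa [mv] using congrFun (hM.mulVec_eigenvectorBasis i) j
  have hev : ∀ i, hM.eigenvalues i ≤ lam := fun i =>
    hlam _ ⟨b i, fun h0 => b.orthonormal.ne_zero i (WithLp.ofLp_injective 2 h0),
      hM.mulVec_eigenvectorBasis i⟩
  calc ⟪v, mv M v⟫ = ∑ i, hM.eigenvalues i * (⟪v, b i⟫ * ⟪b i, v⟫) := by
        rw [← b.sum_inner_mul_inner v (mv M v)]
        refine Finset.sum_congr rfl fun i _ => ?_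
        rw [inner_mv_right, hMT, hMb, real_inner_smul_left]
        ring
    _ ≤ ∑ i, lam * (⟪v, b i⟫ * ⟪b i, v⟫) := by
        gcongr with i
        · rw [real_inner_comm]; exact mul_self_nonneg _
        · exact hev i
    _ = lam * ‖v‖ ^ 2 := by
        rw [← Finset.mul_sum, b.sum_inner_mul_inner, real_inner_self_eq_norm_sq]

lemma norm_mv_sq_le {n p : ℕ} {A : Matrix (Fin n) (Fin p) ℝ} {LA : ℝ}
    (hLA : IsLargestEigenvalue (Aᵀ * A) LA) (d : Vec p) : ‖mv A d‖ ^ 2 ≤ LA * ‖d‖ ^ 2 := by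
  have hAA : (Aᵀ * A).IsHermitian := by
    simpa [conjTranspose_eq_transpose_of_trivial] using
      isHermitian_conjTranspose_mul_self A
  calc ‖mv A d‖ ^ 2 = ⟪d, mv (Aᵀ * A) d⟫ := by
        rw [← real_inner_self_eq_norm_sq, inner_mv_right, real_inner_comm, mv_mul]
    _ ≤ LA * ‖d‖ ^ 2 := inner_mv_self_le_mul_norm_sq hAA hLA.2 d

lemma norm_add_mv_sq_le {n p : ℕ} {A : Matrix (Fin n) (Fin p) ℝ} {LA : ℝ}
    (hLA : IsLargestEigenvalue (Aᵀ * A) LA) (w : Vec n) (d : Vec p) :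
    ‖w + mv A d‖ ^ 2 ≤ ‖w‖ ^ 2 + 2 * ⟪d, mv Aᵀ w⟫ + LA * ‖d‖ ^ 2 := by
  rw [norm_add_sq_real, inner_mv_right, real_inner_comm]
  linarith [norm_mv_sq_le hLA d]

lemma LipschitzDifferentiable2.left {p q : ℕ} {g : Vec p → Vec q → ℝ} {L : ℝ}
    (hg : LipschitzDifferentiable2 g L) (y : Vec q) :
    LipschitzDifferentiable (fun x => g x y) L := by
  refine ⟨hg.1 y, fun a b => ?_⟩
  have h := hg.2.2 a b y y
  rw [sub_self, norm_zero, zero_pow two_ne_zero, add_zero, Real.sqrt_sq (norm_nonneg _)] at h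
  refine le_trans ?_ h
  exact Real.le_sqrt_of_sq_le (le_add_of_nonneg_right (sq_nonneg _))

lemma fbar_self {p q n : ℕ} (f : Vec p → ℝ) (g : Vec p → Vec q → ℝ)
    (A : Matrix (Fin n) (Fin p) ℝ) (B : Matrix (Fin n) (Fin q) ℝ) (β Lx : ℝ)
    (xk : Vec p) (yk : Vec q) (γk : Vec n) :
    fbar f g A B β Lx xk yk γk xk = f xk + ⟪γk, mv A xk⟫ := by
  simp [fbar]

theorem statement4_general {p q n : ℕ}
    (A : Matrix (Fin n) (Fin p) ℝ) (B : Matrix (Fin n) (Fin q) ℝ)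
    (g : Vec p → Vec q → ℝ) (f : Vec p → ℝ) (h : Vec q → ℝ)
    (Lg : ℝ) (hg : LipschitzDifferentiable2 g Lg)
    (Lx β LA : ℝ) (hβ : 0 < β)
    (hLA : IsLargestEigenvalue (Aᵀ * A) LA)
    (xk xk1 : Vec p) (yk : Vec q) (γk : Vec n)
    (hmin : ∀ x : Vec p,
      fbar f g A B β Lx xk yk γk xk1 ≤ fbar f g A B β Lx xk yk γk x) :
    Lagr β g f h A B xk yk γk - Lagr β g f h A B xk1 yk γk ≥
      (Lx - Lg - β * LA) / 2 * ‖xk1 - xk‖ ^ 2 := by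
  have hxk1 : xk1 = xk + (xk1 - xk) := (add_sub_cancel xk xk1).symm
  have hdescent : g xk1 yk ≤
      g xk yk + ⟪gradx g xk yk, xk1 - xk⟫ + Lg / 2 * ‖xk1 - xk‖ ^ 2 := by
    conv_lhs => rw [hxk1]
    exact apply_add_le_of_lipschitz_gradient (hg.left yk).1 (hg.left yk).2 xk (xk1 - xk)
  have hpenalty : ‖mv A xk1 + mv B yk‖ ^ 2 ≤ ‖mv A xk + mv B yk‖ ^ 2 +
      2 * ⟪xk1 - xk, mv Aᵀ (mv A xk + mv B yk)⟫ + LA * ‖xk1 - xk‖ ^ 2 := by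
    conv_lhs => rw [hxk1, mv_add, add_right_comm]
    exact norm_add_mv_sq_le hLA _ _
  have hdecrease := hmin xk
  rw [fbar_self] at hdecrease
  simp only [fbar, Lagr, inner_add_right, real_inner_smul_right] at hdecrease ⊢
  rw [real_inner_comm] at hdescent
  linarith [mul_le_mul_of_nonneg_left hpenalty (half_pos hβ).le]

theorem statement4 {p q n : ℕ}
    (A : Matrix (Fin n) (Fin p) ℝ) (B : Matrix (Fin n) (Fin q) ℝ)
    (g : Vec p → Vec q → ℝ) (f : Vec p → ℝ) (h : Vec q → ℝ)
    (Lg : ℝ) (hg : LipschitzDifferentiable2 g Lg)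
    (Lx β LA : ℝ) (hLx : 0 < Lx) (hβ : 0 < β)
    (hLA : IsLargestEigenvalue (Aᵀ * A) LA)
    (xk xk1 : Vec p) (yk : Vec q) (γk : Vec n)
    (hmin : ∀ x : Vec p,
      fbar f g A B β Lx xk yk γk xk1 ≤ fbar f g A B β Lx xk yk γk x) :
    Lagr β g f h A B xk yk γk - Lagr β g f h A B xk1 yk γk ≥
      (Lx - Lg - β * LA) / 2 * ‖xk1 - xk‖ ^ 2 :=
  statement4_general A B g f h Lg hg Lx β LA hβ hLA xk xk1 yk γk hmin
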